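/- Let α,β>0 be real with (αq;q)_m≠0 for all m≥0. Then for all integers n≥0 and j≥0: ∑_{x=0}^{j} (−1)^x q^{x(x−1)/2} · φ_n(x)/((q;q)_x (q;q)_{j−x}) = ((αβq^{n+1};q)_j/((αq;q)_j (q;q)_j)) · q^{−n²/2} (q;q)_n, where φ_n(x)=q^{−n²/2}(q;q)_n(αβq^{n+1})^x(β^{−1}q^{−n};q)_x/(αq;q)_x for all integers x≥0 (this is Q_n(x;α,β,n|q), extended by the same formula to all x≥0), and q^{−n²/2} denotes the real power of q. -/

import Mathlib

/-!
Put `c = αβq^{n+1}` and `B = β⁻¹q^{-n}`, so that `cB = αq`. After the factor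
`q^{-n²/2}(q;q)_n` of `φ_n` is pulled out and the denominators `(αq;q)_j (q;q)_j` are cleared,
the claim becomes the identity, valid for all `c` and `B`,
  `∑_x [j, x]_q (-1)^x q^{x(x-1)/2} c^x (B;q)_x (cBq^x;q)_{j-x} = (c;q)_j`.
It follows by induction on `j` from the q-Pascal rule `[j+1, x+1] = [j, x+1] + q^{j-x} [j, x]`:
the first part contributes `(1 - cBq^j)(c;q)_j`, and the second, which is the identity at `Bq`,
contributes `-cq^j(1 - B)(c;q)_j`; these add up to `(c;q)_{j+1}`.
-/

open Finset

noncomputable section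

/-- q-shifted factorial `(a;q)_m`. -/
def qPoch (q a : ℝ) (m : ℕ) : ℝ := ∏ k ∈ Finset.range m, (1 - a * q ^ k)

/-- `φ_n(x) = Q_n(x; a, b, n | q)`, extended by the same formula to all `x ≥ 0`. -/
def phiR (q a b : ℝ) (n : ℕ) : ℕ → ℝ := fun x =>
  q ^ (-((n : ℝ) ^ 2) / 2) * qPoch q q n * (a * b * q ^ (n + 1)) ^ x *
    qPoch q (b⁻¹ * q ^ (-(n : ℤ))) x / qPoch q (a * q) x

section QPochhammer

variable (q : ℝ)

@[simp]
lemma qPoch_zero (a : ℝ) : qPoch q a 0 = 1 := rfl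

lemma qPoch_succ (a : ℝ) (m : ℕ) : qPoch q a (m + 1) = qPoch q a m * (1 - a * q ^ m) :=
  prod_range_succ _ _

lemma qPoch_add (a : ℝ) (m k : ℕ) :
    qPoch q a (m + k) = qPoch q a m * qPoch q (a * q ^ m) k := by
  simp only [qPoch, prod_range_add, pow_add, mul_assoc]

lemma qPoch_succ' (a : ℝ) (m : ℕ) : qPoch q a (m + 1) = (1 - a) * qPoch q (a * q) m := by
  rw [add_comm, qPoch_add]
  simp [qPoch_succ]

lemma qPoch_self_pos {q : ℝ} (hq0 : 0 ≤ q) (hq1 : q < 1) (m : ℕ) : 0 < qPoch q q m :=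
  prod_pos fun k _ => by
    rw [← pow_succ', sub_pos]
    exact pow_lt_one₀ hq0 hq1 k.succ_ne_zero

end QPochhammer

/-- The Gaussian binomial coefficient `[j, x]_q`, defined by the q-Pascal rule so that it makes
sense for every `q`. -/
def qBinom (q : ℝ) : ℕ → ℕ → ℝ
  | _, 0 => 1
  | 0, _ + 1 => 0
  | j + 1, x + 1 => qBinom q j (x + 1) + q ^ (j - x) * qBinom q j x

section QBinomial

variable (q : ℝ)

@[simp]
lemma qBinom_zero_right (j : ℕ) : qBinom q j 0 = 1 := by
  cases j <;> rfl

lemma qBinom_succ_succ (j x : ℕ) :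
    qBinom q (j + 1) (x + 1) = qBinom q j (x + 1) + q ^ (j - x) * qBinom q j x := rfl

lemma qBinom_of_lt : ∀ {j x : ℕ}, j < x → qBinom q j x = 0
  | 0, _ + 1, _ => rfl
  | j + 1, x + 1, h => by
    rw [qBinom_succ_succ, qBinom_of_lt (by omega), qBinom_of_lt (by omega), mul_zero, add_zero]

lemma qBinom_mul_qPoch_mul_qPoch (j : ℕ) :
    ∀ x ≤ j, qBinom q j x * qPoch q q x * qPoch q q (j - x) = qPoch q q j := by
  induction j with
  | zero => intro x hx; simp [Nat.le_zero.mp hx]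
  | succ j ih =>
    rintro (_ | x) hx
    · simp
    obtain ⟨d, rfl⟩ := Nat.exists_eq_add_of_le (Nat.le_of_succ_le_succ hx)
    have hlow := ih x (by omega)
    rw [Nat.add_sub_cancel_left] at hlow
    rw [qBinom_succ_succ, Nat.add_sub_cancel_left, show x + d + 1 - (x + 1) = d by omega,
      qPoch_succ q q x, qPoch_succ q q (x + d)]
    rcases d with _ | e
    · rw [qBinom_of_lt q (by omega)]
      linear_combination (1 - q * q ^ x) * hlow
    · have hhigh := ih (x + 1) (by omega)
      rw [show x + (e + 1) - (x + 1) = e by omega] at hhigh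
      rw [qPoch_succ q q e] at hlow ⊢
      rw [qPoch_succ q q x] at hhigh
      simp only [← add_assoc] at hlow hhigh ⊢
      linear_combination (1 - q * q ^ e) * hhigh + q ^ (e + 1) * (1 - q * q ^ x) * hlow

theorem sum_qBinom_mul_qPoch (c B : ℝ) (j : ℕ) :
    ∑ x ∈ range (j + 1), qBinom q j x *
      ((-1) ^ x * q ^ x.choose 2 * c ^ x * qPoch q B x * qPoch q (c * B * q ^ x) (j - x)) =
      qPoch q c j := by
  induction j generalizing B with
  | zero => simp [qPoch]
  | succ j ih =>
    have hkeep_term {x : ℕ} (hx : x ≤ j) :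
        qPoch q (c * B * q ^ x) (j + 1 - x) =
          (1 - c * B * q ^ j) * qPoch q (c * B * q ^ x) (j - x) := by
      rw [Nat.sub_add_comm hx, qPoch_succ, mul_assoc (c * B), ← pow_add, Nat.add_sub_cancel' hx]
      ring
    have hshift_term {x : ℕ} (hx : x ≤ j) :
        q ^ (j - x) * ((-1) ^ (x + 1) * q ^ (x + 1).choose 2 * c ^ (x + 1) * qPoch q B (x + 1) *
          qPoch q (c * B * q ^ (x + 1)) (j + 1 - (x + 1))) =
        -(c * q ^ j * (1 - B)) * ((-1) ^ x * q ^ x.choose 2 * c ^ x * qPoch q (B * q) x *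
          qPoch q (c * (B * q) * q ^ x) (j - x)) := by
      obtain ⟨d, rfl⟩ := Nat.exists_eq_add_of_le hx
      rw [Nat.choose_succ_succ', Nat.choose_one_right, qPoch_succ', Nat.add_sub_add_right,
        Nat.add_sub_cancel_left, show c * (B * q) * q ^ x = c * B * q ^ (x + 1) by ring]
      ring
    set T : ℕ → ℝ := fun x =>
      (-1) ^ x * q ^ x.choose 2 * c ^ x * qPoch q B x * qPoch q (c * B * q ^ x) (j + 1 - x)
    have hpascal : ∑ x ∈ range (j + 1 + 1), qBinom q (j + 1) x * T x =
        ∑ x ∈ range (j + 1), qBinom q j x * T x +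
          ∑ x ∈ range (j + 1), q ^ (j - x) * (qBinom q j x * T (x + 1)) := by
      have hdrop : ∑ x ∈ range (j + 1), qBinom q j x * T x =
          ∑ x ∈ range (j + 1 + 1), qBinom q j x * T x := by
        rw [sum_range_succ _ (j + 1), qBinom_of_lt q (Nat.lt_succ_self j), zero_mul, add_zero]
      rw [hdrop, sum_range_succ' _ (j + 1), sum_range_succ' (fun x => qBinom q j x * T x)]
      simp only [qBinom_succ_succ, add_mul, sum_add_distrib, qBinom_zero_right, mul_assoc]
      ring
    have hkeep :
        ∑ x ∈ range (j + 1), qBinom q j x * T x = (1 - c * B * q ^ j) * qPoch q c j := by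
      rw [← ih B, mul_sum]
      refine sum_congr rfl fun x hx => ?_
      dsimp only [T]
      rw [hkeep_term (Nat.lt_succ_iff.mp (mem_range.mp hx))]
      ring
    have hshift : ∑ x ∈ range (j + 1), q ^ (j - x) * (qBinom q j x * T (x + 1)) =
        -(c * q ^ j * (1 - B)) * qPoch q c j := by
      rw [← ih (B * q), mul_sum]
      refine sum_congr rfl fun x hx => ?_
      rw [mul_left_comm]
      dsimp only [T]
      rw [hshift_term (Nat.lt_succ_iff.mp (mem_range.mp hx))]
      ring
    rw [hpascal, hkeep, hshift, qPoch_succ]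
    ring

end QBinomial

lemma qBinom_eq_div {q : ℝ} (hq0 : 0 ≤ q) (hq1 : q < 1) {j x : ℕ} (hxj : x ≤ j) :
    qBinom q j x = qPoch q q j / (qPoch q q x * qPoch q q (j - x)) := by
  rw [eq_div_iff (mul_pos (qPoch_self_pos hq0 hq1 x) (qPoch_self_pos hq0 hq1 (j - x))).ne',
    ← mul_assoc, qBinom_mul_qPoch_mul_qPoch q j x hxj]

theorem sum_div_qPoch_eq {q : ℝ} (hq0 : 0 ≤ q) (hq1 : q < 1) (c B : ℝ) (j : ℕ)
    (hcB : qPoch q (c * B) j ≠ 0) :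
    ∑ x ∈ range (j + 1), (-1) ^ x * q ^ x.choose 2 * c ^ x * qPoch q B x /
        (qPoch q (c * B) x * (qPoch q q x * qPoch q q (j - x))) =
      qPoch q c j / (qPoch q (c * B) j * qPoch q q j) := by
  rw [← sum_qBinom_mul_qPoch q c B j, sum_div]
  refine sum_congr rfl fun x hx => ?_
  have hxj : x ≤ j := Nat.lt_succ_iff.mp (mem_range.mp hx)
  have hsplit := qPoch_add q (c * B) x (j - x)
  rw [Nat.add_sub_cancel' hxj] at hsplit
  rw [hsplit] at hcB ⊢
  rw [qBinom_eq_div hq0 hq1 hxj]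
  field_simp [left_ne_zero_of_mul hcB, right_ne_zero_of_mul hcB,
    (qPoch_self_pos hq0 hq1 x).ne', (qPoch_self_pos hq0 hq1 (j - x)).ne',
    (qPoch_self_pos hq0 hq1 j).ne']

theorem stmt13_general (q : ℝ) (hq0 : 0 < q) (hq1 : q < 1) (a b : ℝ) (hb : 0 < b)
    (hpoch : ∀ m : ℕ, qPoch q (a * q) m ≠ 0) (n j : ℕ) :
    ∑ x ∈ Finset.range (j + 1),
      (-1 : ℝ) ^ x * q ^ (x * (x - 1) / 2) * phiR q a b n x /
        (qPoch q q x * qPoch q q (j - x)) =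
      qPoch q (a * b * q ^ (n + 1)) j / (qPoch q (a * q) j * qPoch q q j) *
        (q ^ (-((n : ℝ) ^ 2) / 2) * qPoch q q n) := by
  have hcB : a * b * q ^ (n + 1) * (b⁻¹ * q ^ (-(n : ℤ))) = a * q := by
    rw [zpow_neg, zpow_natCast, pow_succ]
    field_simp
  have key := sum_div_qPoch_eq hq0.le hq1 _ _ j (hcB ▸ hpoch j)
  rw [hcB] at key
  rw [← key, sum_mul]
  refine sum_congr rfl fun x _ => ?_
  rw [phiR, Nat.choose_two_right]
  ring

theorem stmt13 (q : ℝ) (hq0 : 0 < q) (hq1 : q < 1) (a b : ℝ) (ha : 0 < a) (hb : 0 < b)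
    (hpoch : ∀ m : ℕ, qPoch q (a * q) m ≠ 0) (n j : ℕ) :
    ∑ x ∈ Finset.range (j + 1),
      (-1 : ℝ) ^ x * q ^ (x * (x - 1) / 2) * phiR q a b n x /
        (qPoch q q x * qPoch q q (j - x)) =
      qPoch q (a * b * q ^ (n + 1)) j / (qPoch q (a * q) j * qPoch q q j) *
        (q ^ (-((n : ℝ) ^ 2) / 2) * qPoch q q n) :=
  stmt13_general q hq0 hq1 a b hb hpoch n j
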